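/- arXiv:1605.08655 — 3 statements merged into one kernel-verified Lean document; each statement's English description precedes it below -/
import Mathlib

section
/- Let N ≥ 1, let ρ be a density matrix on the N-fold tensor product of finite-dimensional local Hilbert spaces, and for each j let X_j and P_j be Hermitian matrices on the j-th factor. Define U = Σ_{j=1}^N X̃_j and V = Σ_{j=1}^N (−1)^j P̃_j. If ⟨ΔU²⟩_ρ + ⟨ΔV²⟩_ρ < N/2, then ρ is not separable with respect to local states all satisfying the uncertainty bound; that is, there is no decomposition ρ = Σ_k q_k (⊗_j ρ_{jk}) with q_k ≥ 0, Σ_k q_k = 1, each ρ_{jk} a density matrix on the j-th factor, and ⟨ΔX_j²⟩_{ρ_{jk}} + ⟨ΔP_j²⟩_{ρ_{jk}} ≥ 1/2 for all j, k. -/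
open Matrix BigOperators Finset ComplexOrder

noncomputable section

/-- Tensor product of local matrices: `(⊗_j A_j)(a,b) = Π_j A_j (a j) (b j)`. -/
def tensorProd {N : ℕ} {ι : Fin N → Type} [∀ j, Fintype (ι j)]
    (A : ∀ j, Matrix (ι j) (ι j) ℂ) : Matrix (∀ j, ι j) (∀ j, ι j) ℂ :=
  Matrix.of fun a b => ∏ j, A j (a j) (b j)

/-- Lift of a local matrix `X` on the `j`-th factor: `X` tensored with the identity
on all other factors. -/
def liftOp {N : ℕ} {ι : Fin N → Type} [∀ j, Fintype (ι j)] [∀ j, DecidableEq (ι j)]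
    (j : Fin N) (X : Matrix (ι j) (ι j) ℂ) : Matrix (∀ j, ι j) (∀ j, ι j) ℂ :=
  Matrix.of fun a b =>
    X (a j) (b j) * ∏ l ∈ Finset.univ.erase j, (if a l = b l then (1 : ℂ) else 0)

/-- A density matrix: positive semidefinite (hence Hermitian) with unit trace. -/
def IsDensityMatrix {n : Type} [Fintype n] (ρ : Matrix n n ℂ) : Prop :=
  ρ.PosSemidef ∧ ρ.trace = 1

/-- Expectation value `⟨A⟩_ρ = Tr(ρ A)` (real part; it is real for Hermitian `ρ`, `A`). -/
def expVal {n : Type} [Fintype n] (ρ A : Matrix n n ℂ) : ℝ := ((ρ * A).trace).re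

/-- Variance `⟨ΔA²⟩_ρ = Tr(ρ A²) − (Tr(ρ A))²`. -/
def varVal {n : Type} [Fintype n] (ρ A : Matrix n n ℂ) : ℝ :=
  expVal ρ (A * A) - (expVal ρ A) ^ 2

variable {N : ℕ} {ι : Fin N → Type} [∀ j, Fintype (ι j)] [∀ j, DecidableEq (ι j)]

lemma tensorProd_mul (A B : ∀ j, Matrix (ι j) (ι j) ℂ) :
    tensorProd A * tensorProd B = tensorProd (fun j => A j * B j) := by
  ext a c
  simp only [tensorProd, Matrix.mul_apply, Matrix.of_apply]
  rw [Fintype.prod_sum]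
  exact Finset.sum_congr rfl fun b _ => (Finset.prod_mul_distrib).symm

lemma tensorProd_trace (A : ∀ j, Matrix (ι j) (ι j) ℂ) :
    (tensorProd A).trace = ∏ j, (A j).trace := by
  simp only [Matrix.trace, Matrix.diag, tensorProd, Matrix.of_apply]
  rw [Fintype.prod_sum]

lemma liftOp_eq (j : Fin N) (X : Matrix (ι j) (ι j) ℂ) :
    liftOp j X = tensorProd (Function.update (fun l => (1 : Matrix (ι l) (ι l) ℂ)) j X) := by
  ext a b
  simp only [liftOp, tensorProd, Matrix.of_apply]
  rw [← Finset.mul_prod_erase _ _ (Finset.mem_univ j), Function.update_self]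
  congr 1
  refine Finset.prod_congr rfl fun l hl => ?_
  rw [Function.update_of_ne (Finset.ne_of_mem_erase hl), Matrix.one_apply]

lemma liftOp_mul_same (j : Fin N) (X Y : Matrix (ι j) (ι j) ℂ) :
    liftOp j X * liftOp j Y = liftOp j (X * Y) := by
  have key : (fun m => Function.update (fun m' => (1:Matrix (ι m') (ι m') ℂ)) j X m *
      Function.update (fun m' => (1:Matrix (ι m') (ι m') ℂ)) j Y m)
      = Function.update (fun m' => (1:Matrix (ι m') (ι m') ℂ)) j (X * Y) := by
    funext l
    rcases eq_or_ne l j with rfl | h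
    · simp
    · simp [Function.update_of_ne h]
  rw [liftOp_eq, liftOp_eq, tensorProd_mul, key, ← liftOp_eq]

lemma trace_tensor_lift (r : ∀ j, Matrix (ι j) (ι j) ℂ) (hr : ∀ l, (r l).trace = 1)
    (j : Fin N) (X : Matrix (ι j) (ι j) ℂ) :
    (tensorProd r * liftOp j X).trace = (r j * X).trace := by
  rw [liftOp_eq, tensorProd_mul, tensorProd_trace,
    ← Finset.mul_prod_erase _ _ (Finset.mem_univ j), Function.update_self]
  have h1 : ∀ l ∈ Finset.univ.erase j,
      (r l * Function.update (fun m => (1 : Matrix (ι m) (ι m) ℂ)) j X l).trace = 1 := by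
    intro l hl
    rw [Function.update_of_ne (Finset.ne_of_mem_erase hl), mul_one, hr l]
  rw [Finset.prod_congr rfl h1, Finset.prod_const_one, mul_one]

lemma trace_tensor_lift_ne (r : ∀ j, Matrix (ι j) (ι j) ℂ) (hr : ∀ l, (r l).trace = 1)
    {j l : Fin N} (h : j ≠ l) (X : Matrix (ι j) (ι j) ℂ) (Y : Matrix (ι l) (ι l) ℂ) :
    (tensorProd r * (liftOp j X * liftOp l Y)).trace = (r j * X).trace * (r l * Y).trace := by
  rw [liftOp_eq, liftOp_eq, tensorProd_mul, tensorProd_mul, tensorProd_trace]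
  set f := fun m => (r m * (Function.update (fun m' => (1:Matrix (ι m') (ι m') ℂ)) j X m *
      Function.update (fun m' => (1:Matrix (ι m') (ι m') ℂ)) l Y m)).trace with hf
  have hsub : ∏ m ∈ ({j, l} : Finset (Fin N)), f m = ∏ m, f m := by
    apply Finset.prod_subset (Finset.subset_univ _)
    intro m _ hm
    simp only [Finset.mem_insert, Finset.mem_singleton, not_or] at hm
    simp [hf, Function.update_of_ne hm.1, Function.update_of_ne hm.2, hr m]
  rw [← hsub, Finset.prod_pair h]
  simp [hf, Function.update_of_ne h, Function.update_of_ne h.symm]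

lemma trace_mul_real {n : Type} [Fintype n] {ρ A : Matrix n n ℂ}
    (hρ : ρ.IsHermitian) (hA : A.IsHermitian) :
    (((ρ * A).trace.re : ℝ) : ℂ) = (ρ * A).trace := by
  rw [← Complex.conj_eq_iff_re]
  have : ((ρ * A)ᴴ).trace = star ((ρ * A).trace) := Matrix.trace_conjTranspose _
  rw [Matrix.conjTranspose_mul, hρ.eq, hA.eq, Matrix.trace_mul_comm] at this
  exact this.symm

lemma expVal_sum_smul {n : Type} [Fintype n] {m : ℕ} (q : Fin m → ℝ)
    (σ : Fin m → Matrix n n ℂ) (A : Matrix n n ℂ) :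
    expVal (∑ k, (q k : ℂ) • σ k) A = ∑ k, q k * expVal (σ k) A := by
  simp only [expVal, Finset.sum_mul, smul_mul_assoc, Matrix.trace_sum, Matrix.trace_smul,
    Complex.re_sum, smul_eq_mul, Complex.re_ofReal_mul]

lemma sum_varVal_le {n : Type} [Fintype n] {m : ℕ} {q : Fin m → ℝ}
    (hq : ∀ k, 0 ≤ q k) (hq1 : ∑ k, q k = 1)
    (σ : Fin m → Matrix n n ℂ) (A : Matrix n n ℂ) :
    ∑ k, q k * varVal (σ k) A ≤ varVal (∑ k, (q k : ℂ) • σ k) A := by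
  simp only [varVal, expVal_sum_smul, mul_sub, Finset.sum_sub_distrib]
  have key : (∑ k, q k * expVal (σ k) A) ^ 2 ≤ ∑ k, q k * expVal (σ k) A ^ 2 := by
    have h := Finset.sum_mul_sq_le_sq_mul_sq Finset.univ (fun k => Real.sqrt (q k))
      (fun k => Real.sqrt (q k) * expVal (σ k) A)
    have h1 : ∀ k : Fin m, Real.sqrt (q k) * (Real.sqrt (q k) * expVal (σ k) A)
        = q k * expVal (σ k) A := fun k => by
      rw [← mul_assoc, Real.mul_self_sqrt (hq k)]
    have h2 : ∀ k : Fin m, Real.sqrt (q k) ^ 2 = q k := fun k => Real.sq_sqrt (hq k)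
    have h3 : ∀ k : Fin m, (Real.sqrt (q k) * expVal (σ k) A) ^ 2
        = q k * expVal (σ k) A ^ 2 := fun k => by rw [mul_pow, h2]
    calc (∑ k, q k * expVal (σ k) A) ^ 2
        = (∑ k, Real.sqrt (q k) * (Real.sqrt (q k) * expVal (σ k) A)) ^ 2 := by
          rw [Finset.sum_congr rfl fun k _ => h1 k]
      _ ≤ (∑ k, Real.sqrt (q k) ^ 2) * ∑ k, (Real.sqrt (q k) * expVal (σ k) A) ^ 2 := h
      _ = ∑ k, q k * expVal (σ k) A ^ 2 := by
          rw [Finset.sum_congr rfl fun k _ => h2 k, hq1, one_mul,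
            Finset.sum_congr rfl fun k _ => h3 k]
  linarith

lemma varVal_tensor (r : ∀ j, Matrix (ι j) (ι j) ℂ)
    (hr1 : ∀ j, (r j).trace = 1) (hrH : ∀ j, (r j).IsHermitian)
    (A : ∀ j, Matrix (ι j) (ι j) ℂ) (hA : ∀ j, (A j).IsHermitian) (c : Fin N → ℝ) :
    varVal (tensorProd r) (∑ j, ((c j : ℂ)) • liftOp j (A j))
      = ∑ j, (c j) ^ 2 * varVal (r j) (A j) := by
  set M := ∑ j, ((c j : ℂ)) • liftOp j (A j) with hM
  set e : Fin N → ℂ := fun j => (r j * A j).trace with he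
  set E : Fin N → ℂ := fun j => (r j * (A j * A j)).trace with hE
  have hereal : ∀ j, (((e j).re : ℝ) : ℂ) = e j := fun j => trace_mul_real (hrH j) (hA j)
  have hT1 : (tensorProd r * M).trace = ∑ j, (c j : ℂ) * e j := by
    rw [hM, Matrix.mul_sum, Matrix.trace_sum]
    refine Finset.sum_congr rfl fun j _ => ?_
    rw [mul_smul_comm, Matrix.trace_smul, trace_tensor_lift r hr1, smul_eq_mul]
  have hT2 : (tensorProd r * (M * M)).trace
      = ∑ j, ∑ l, (c j : ℂ) * (c l : ℂ) * (if l = j then E j else e j * e l) := by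
    rw [hM, Finset.sum_mul_sum, Matrix.mul_sum, Matrix.trace_sum]
    refine Finset.sum_congr rfl fun j _ => ?_
    rw [Matrix.mul_sum, Matrix.trace_sum]
    refine Finset.sum_congr rfl fun l _ => ?_
    simp only [smul_mul_assoc, mul_smul_comm, Matrix.trace_smul, smul_eq_mul]
    rcases eq_or_ne l j with rfl | h
    · rw [liftOp_mul_same, trace_tensor_lift r hr1, if_pos rfl, hE]; ring
    · rw [trace_tensor_lift_ne r hr1 (Ne.symm h), if_neg h, he]; ring
  have hT1real : (tensorProd r * M).trace = ((∑ j, c j * (e j).re : ℝ) : ℂ) := by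
    rw [hT1]; push_cast
    exact Finset.sum_congr rfl fun j _ => by rw [hereal]
  have hdiff : (tensorProd r * (M * M)).trace - ((tensorProd r * M).trace) ^ 2
      = ∑ j, (c j : ℂ) ^ 2 * (E j - e j ^ 2) := by
    rw [hT2, hT1, sq, Finset.sum_mul_sum, ← Finset.sum_sub_distrib]
    refine Finset.sum_congr rfl fun j _ => ?_
    rw [← Finset.sum_sub_distrib, Finset.sum_eq_single j]
    · rw [if_pos rfl]; ring
    · intro l _ hl; rw [if_neg hl]; ring
    · intro h; exact absurd (Finset.mem_univ j) h
  have hsq : ((tensorProd r * M).trace.re) ^ 2 = (((tensorProd r * M).trace) ^ 2).re := by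
    rw [hT1real, ← Complex.ofReal_pow, Complex.ofReal_re, Complex.ofReal_re]
  show ((tensorProd r * (M * M)).trace).re - ((tensorProd r * M).trace.re) ^ 2 = _
  rw [hsq, ← Complex.sub_re, hdiff, Complex.re_sum]
  refine Finset.sum_congr rfl fun j _ => ?_
  have hterm : (c j : ℂ) ^ 2 * (E j - e j ^ 2)
      = (((c j) ^ 2 : ℝ) : ℂ) * (E j - ((((e j).re) ^ 2 : ℝ) : ℂ)) := by
    rw [Complex.ofReal_pow, Complex.ofReal_pow, hereal]
  rw [hterm, Complex.re_ofReal_mul, Complex.sub_re, Complex.ofReal_re]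
  rfl

/-- **Theorem 3.2.** If `⟨ΔU²⟩_ρ + ⟨ΔV²⟩_ρ < N/2` for `U = Σ_j X̃_j`, `V = Σ_j (−1)^j P̃_j`,
then `ρ` admits no separable decomposition into product states all obeying the
local uncertainty bound `⟨ΔX_j²⟩ + ⟨ΔP_j²⟩ ≥ 1/2`. -/
theorem inseparable_of_total_variance_lt
    {N : ℕ} (hN : 1 ≤ N) {ι : Fin N → Type} [∀ j, Fintype (ι j)] [∀ j, DecidableEq (ι j)]
    (ρ : Matrix (∀ j, ι j) (∀ j, ι j) ℂ)
    (hρ : IsDensityMatrix ρ)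
    (X P : ∀ j, Matrix (ι j) (ι j) ℂ)
    (hX : ∀ j, (X j).IsHermitian) (hP : ∀ j, (P j).IsHermitian)
    (U V : Matrix (∀ j, ι j) (∀ j, ι j) ℂ)
    (hU : U = ∑ j, liftOp j (X j))
    (hV : V = ∑ j : Fin N, ((-1 : ℂ) ^ ((j : ℕ) + 1)) • liftOp j (P j))
    (hlt : varVal ρ U + varVal ρ V < (N : ℝ) / 2) :
    ¬ ∃ (m : ℕ) (q : Fin m → ℝ) (ρloc : Fin m → ∀ j, Matrix (ι j) (ι j) ℂ),
        (∀ k, 0 ≤ q k) ∧ (∑ k, q k = 1) ∧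
        (∀ k j, IsDensityMatrix (ρloc k j)) ∧
        (ρ = ∑ k, (q k : ℂ) • tensorProd (ρloc k)) ∧
        (∀ k j, varVal (ρloc k j) (X j) + varVal (ρloc k j) (P j) ≥ 1 / 2) := by
  rintro ⟨m, q, ρloc, hq0, hq1, hdens, hdecomp, hunc⟩
  have htr : ∀ k j, (ρloc k j).trace = 1 := fun k j => (hdens k j).2
  have hH : ∀ k j, (ρloc k j).IsHermitian := fun k j => (hdens k j).1.1
  have hUk : ∀ k, varVal (tensorProd (ρloc k)) U = ∑ j, varVal (ρloc k j) (X j) := by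
    intro k
    have h1 : U = ∑ j, (((1 : ℝ) : ℂ)) • liftOp j (X j) := by rw [hU]; simp
    rw [h1, varVal_tensor (ρloc k) (htr k) (hH k) X hX (fun _ => (1 : ℝ))]
    simp
  have hVk : ∀ k, varVal (tensorProd (ρloc k)) V = ∑ j, varVal (ρloc k j) (P j) := by
    intro k
    have h1 : V = ∑ j : Fin N, ((((-1 : ℝ) ^ ((j : ℕ) + 1) : ℝ)) : ℂ) • liftOp j (P j) := by
      rw [hV]
      refine Finset.sum_congr rfl fun j _ => ?_
      norm_num
    rw [h1, varVal_tensor (ρloc k) (htr k) (hH k) P hP (fun j => (-1 : ℝ) ^ ((j : ℕ) + 1))]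
    refine Finset.sum_congr rfl fun j _ => ?_
    rw [← pow_mul, mul_comm ((j : ℕ) + 1) 2, pow_mul]
    norm_num
  have hconcU := sum_varVal_le hq0 hq1 (fun k => tensorProd (ρloc k)) U
  have hconcV := sum_varVal_le hq0 hq1 (fun k => tensorProd (ρloc k)) V
  rw [← hdecomp] at hconcU hconcV
  have hk : ∀ k, (N : ℝ) / 2 ≤ varVal (tensorProd (ρloc k)) U + varVal (tensorProd (ρloc k)) V := by
    intro k
    rw [hUk k, hVk k, ← Finset.sum_add_distrib]
    calc (N : ℝ) / 2 = ∑ _j : Fin N, (1 / 2 : ℝ) := by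
          rw [Finset.sum_const, Finset.card_univ, Fintype.card_fin]
          ring
      _ ≤ ∑ j, (varVal (ρloc k j) (X j) + varVal (ρloc k j) (P j)) :=
          Finset.sum_le_sum fun j _ => hunc k j
  have hsum : (N : ℝ) / 2 ≤ ∑ k, q k * varVal (tensorProd (ρloc k)) U
      + ∑ k, q k * varVal (tensorProd (ρloc k)) V := by
    calc (N : ℝ) / 2 = ∑ k, q k * ((N : ℝ) / 2) := by
          rw [← Finset.sum_mul, hq1, one_mul]
      _ ≤ ∑ k, q k * (varVal (tensorProd (ρloc k)) U + varVal (tensorProd (ρloc k)) V) :=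
          Finset.sum_le_sum fun k _ => mul_le_mul_of_nonneg_left (hk k) (hq0 k)
      _ = _ := by rw [← Finset.sum_add_distrib]; exact Finset.sum_congr rfl fun k _ => by ring
  linarith
end
end

section
/- Let ρ = Σ_k q_k (⊗_{j=1}^N ρ_{jk}) be a separable density matrix on the N-fold tensor product of finite-dimensional local Hilbert spaces, where q_k ≥ 0, Σ_k q_k = 1 and each ρ_{jk} is a density matrix on the j-th factor. For Hermitian matrices X_j on each factor, let U = Σ_{j=1}^N X̃_j and let ⟨U⟩_k denote the expectation of U in the product state ⊗_j ρ_{jk}. Then Tr(ρ U²) = Σ_k q_k Σ_{j=1}^N ⟨ΔX_j²⟩_{ρ_{jk}} + Σ_k q_k ⟨U⟩_k². -/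
open Matrix BigOperators Finset ComplexOrder

noncomputable section

variable {N : ℕ} {ι : Fin N → Type} [∀ j, Fintype (ι j)] [∀ j, DecidableEq (ι j)]

lemma prod_trace_update (ρl : ∀ l, Matrix (ι l) (ι l) ℂ) (hρ : ∀ l, (ρl l).trace = 1)
    (j : Fin N) (Y : Matrix (ι j) (ι j) ℂ) :
    ∏ l, (ρl l * Function.update (fun l => (1 : Matrix (ι l) (ι l) ℂ)) j Y l).trace
      = (ρl j * Y).trace := by
  rw [Finset.prod_eq_single j]
  · rw [Function.update_self]
  · intro l _ hl
    rw [Function.update_of_ne hl, mul_one, hρ]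
  · simp

lemma update_mul_update_self (j : Fin N) (Y Y' : Matrix (ι j) (ι j) ℂ) (l : Fin N) :
    Function.update (fun l => (1 : Matrix (ι l) (ι l) ℂ)) j Y l
      * Function.update (fun l => (1 : Matrix (ι l) (ι l) ℂ)) j Y' l
      = Function.update (fun l => (1 : Matrix (ι l) (ι l) ℂ)) j (Y * Y') l := by
  rcases eq_or_ne l j with rfl | hl
  · simp
  · simp [Function.update_of_ne hl]

lemma update_mul_update_ne {j j' : Fin N} (h : j ≠ j')
    (Y : Matrix (ι j) (ι j) ℂ) (Y' : Matrix (ι j') (ι j') ℂ) (l : Fin N) :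
    Function.update (fun l => (1 : Matrix (ι l) (ι l) ℂ)) j Y l
      * Function.update (fun l => (1 : Matrix (ι l) (ι l) ℂ)) j' Y' l
      = Function.update (Function.update (fun l => (1 : Matrix (ι l) (ι l) ℂ)) j' Y') j Y l := by
  rcases eq_or_ne l j with rfl | hl
  · rw [Function.update_self, Function.update_self, Function.update_of_ne h, mul_one]
  · rw [Function.update_of_ne hl, one_mul, Function.update_of_ne hl]

lemma prod_trace_update2 (ρl : ∀ l, Matrix (ι l) (ι l) ℂ) (hρ : ∀ l, (ρl l).trace = 1)
    {j j' : Fin N} (h : j ≠ j')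
    (Y : Matrix (ι j) (ι j) ℂ) (Y' : Matrix (ι j') (ι j') ℂ) :
    ∏ l, (ρl l * Function.update (Function.update
        (fun l => (1 : Matrix (ι l) (ι l) ℂ)) j' Y') j Y l).trace
      = (ρl j * Y).trace * (ρl j' * Y').trace := by
  rw [← Finset.mul_prod_erase _ _ (Finset.mem_univ j), Function.update_self]
  congr 1
  rw [← Finset.mul_prod_erase _ _ (Finset.mem_erase.mpr ⟨h.symm, Finset.mem_univ j'⟩),
    Function.update_of_ne h.symm, Function.update_self]
  rw [Finset.prod_eq_one, mul_one]
  intro l hl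
  have hl' : l ≠ j' := (Finset.mem_erase.mp hl).1
  have hlj : l ≠ j := (Finset.mem_erase.mp (Finset.mem_erase.mp hl).2).1
  rw [Function.update_of_ne hlj, Function.update_of_ne hl', mul_one, hρ]

lemma trace_mul_herm_re {n : Type} [Fintype n] (ρ A : Matrix n n ℂ)
    (hρ : ρ.IsHermitian) (hA : A.IsHermitian) :
    ((((ρ * A).trace).re : ℝ) : ℂ) = (ρ * A).trace := by
  apply Complex.conj_eq_iff_re.mp
  calc (starRingEnd ℂ) (ρ * A).trace = star (ρ * A).trace := rfl
    _ = ((ρ * A)ᴴ).trace := (Matrix.trace_conjTranspose _).symm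
    _ = (A * ρ).trace := by rw [Matrix.conjTranspose_mul, hρ, hA]
    _ = (ρ * A).trace := Matrix.trace_mul_comm _ _

lemma sum_sum_ite_eq (s t : Fin N → ℂ) :
    ∑ j, ∑ j', (if j = j' then s j else t j * t j')
      = ∑ j, (s j - (t j) ^ 2) + (∑ j, t j) ^ 2 := by
  have h : ∀ j j' : Fin N, (if j = j' then s j else t j * t j')
      = t j * t j' + (if j = j' then s j - t j * t j else 0) := by
    intro j j'
    rcases eq_or_ne j j' with rfl | h
    · simp
    · simp [h]
  simp_rw [h, Finset.sum_add_distrib, Finset.sum_ite_eq, Finset.mem_univ, if_true]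
  rw [← Finset.sum_mul_sum]
  rw [sq (∑ j, t j)]
  ring_nf

/-- Exact decomposition of `Tr(ρ U²)` for a separable state `ρ = Σ_k q_k ⊗_j ρ_{jk}`:
`Tr(ρ U²) = Σ_k q_k Σ_j ⟨ΔX_j²⟩_{ρ_{jk}} + Σ_k q_k ⟨U⟩_k²`,
where `⟨U⟩_k` is the expectation of `U` in the product state `⊗_j ρ_{jk}`. -/
theorem separable_trace_U_sq_decomposition
    {N : ℕ} {ι : Fin N → Type} [∀ j, Fintype (ι j)] [∀ j, DecidableEq (ι j)]
    {K : Type} [Fintype K]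
    (q : K → ℝ) (hq0 : ∀ k, 0 ≤ q k) (hq1 : ∑ k, q k = 1)
    (ρloc : K → ∀ j, Matrix (ι j) (ι j) ℂ)
    (hρloc : ∀ k j, IsDensityMatrix (ρloc k j))
    (ρ : Matrix (∀ j, ι j) (∀ j, ι j) ℂ)
    (hρ : ρ = ∑ k, (q k : ℂ) • tensorProd (ρloc k))
    (X : ∀ j, Matrix (ι j) (ι j) ℂ) (hX : ∀ j, (X j).IsHermitian)
    (U : Matrix (∀ j, ι j) (∀ j, ι j) ℂ) (hU : U = ∑ j, liftOp j (X j)) :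
    ((ρ * (U * U)).trace).re =
      ∑ k, q k * ∑ j, varVal (ρloc k j) (X j)
        + ∑ k, q k * (expVal (tensorProd (ρloc k)) U) ^ 2 := by
  classical
  set τ : K → Fin N → ℝ := fun k j => expVal (ρloc k j) (X j) with hτ
  set σ : K → Fin N → ℝ := fun k j => expVal (ρloc k j) (X j * X j) with hσ
  have hXX : ∀ j, (X j * X j).IsHermitian := fun j => by
    have h := hX j
    unfold Matrix.IsHermitian at h ⊢
    rw [Matrix.conjTranspose_mul, h]
  have ht : ∀ k j, ((τ k j : ℝ) : ℂ) = (ρloc k j * X j).trace :=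
    fun k j => trace_mul_herm_re _ _ (hρloc k j).1.isHermitian (hX j)
  have hs : ∀ k j, ((σ k j : ℝ) : ℂ) = (ρloc k j * (X j * X j)).trace :=
    fun k j => trace_mul_herm_re _ _ (hρloc k j).1.isHermitian (hXX j)
  have htr1 : ∀ k l, ((ρloc k l).trace) = 1 := fun k l => (hρloc k l).2
  have hliftTr : ∀ k (j : Fin N),
      (tensorProd (ρloc k) * liftOp j (X j)).trace = (ρloc k j * X j).trace := by
    intro k j
    rw [liftOp_eq, tensorProd_mul, tensorProd_trace, prod_trace_update _ (htr1 k)]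
  have hexp : ∀ k, expVal (tensorProd (ρloc k)) U = ∑ j, τ k j := by
    intro k
    unfold expVal
    rw [hU, Matrix.mul_sum, Matrix.trace_sum, Complex.re_sum]
    exact Finset.sum_congr rfl fun j _ => by rw [hliftTr k j, ← ht k j, Complex.ofReal_re]
  have hpair : ∀ k (j j' : Fin N),
      (tensorProd (ρloc k) * (liftOp j (X j) * liftOp j' (X j'))).trace
        = if j = j' then (ρloc k j * (X j * X j)).trace
          else (ρloc k j * X j).trace * (ρloc k j' * X j').trace := by
    intro k j j'
    rw [liftOp_eq, liftOp_eq, tensorProd_mul, tensorProd_mul, tensorProd_trace]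
    rcases eq_or_ne j j' with rfl | h
    · rw [if_pos rfl]
      simp_rw [update_mul_update_self]
      exact prod_trace_update _ (htr1 k) j _
    · rw [if_neg h]
      simp_rw [update_mul_update_ne h]
      exact prod_trace_update2 _ (htr1 k) h _ _
  have key : ∀ k, ((tensorProd (ρloc k) * (U * U)).trace).re
      = ∑ j, (σ k j - τ k j ^ 2) + (∑ j, τ k j) ^ 2 := by
    intro k
    have h1 : (tensorProd (ρloc k) * (U * U)).trace
        = ∑ j, ∑ j', (if j = j' then ((σ k j : ℝ) : ℂ)
            else ((τ k j : ℝ) : ℂ) * ((τ k j' : ℝ) : ℂ)) := by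
      rw [hU, Finset.sum_mul_sum]
      rw [Matrix.mul_sum, Matrix.trace_sum]
      simp_rw [Matrix.mul_sum, Matrix.trace_sum]
      refine Finset.sum_congr rfl fun j _ => Finset.sum_congr rfl fun j' _ => ?_
      rw [hpair k j j', ← hs k j, ← ht k j, ← ht k j']
    have h2 : (tensorProd (ρloc k) * (U * U)).trace
        = ((∑ j, (σ k j - τ k j ^ 2) + (∑ j, τ k j) ^ 2 : ℝ) : ℂ) := by
      rw [h1, sum_sum_ite_eq]
      push_cast
      ring_nf
    rw [h2, Complex.ofReal_re]
  have hmain : ((ρ * (U * U)).trace).re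
      = ∑ k, q k * (∑ j, (σ k j - τ k j ^ 2) + (∑ j, τ k j) ^ 2) := by
    rw [hρ, Matrix.sum_mul, Matrix.trace_sum, Complex.re_sum]
    refine Finset.sum_congr rfl fun k _ => ?_
    rw [smul_mul_assoc, Matrix.trace_smul, smul_eq_mul, Complex.re_ofReal_mul, key k]
  rw [hmain]
  have hvar : ∀ k j, varVal (ρloc k j) (X j) = σ k j - τ k j ^ 2 := fun k j => rfl
  simp_rw [hexp, hvar]
  rw [← Finset.sum_add_distrib]
  exact Finset.sum_congr rfl fun k _ => by ring
end
end

section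
/- Let N ≥ 1 and for each k in a finite index set let ν_{jk} (j = 1,…,N) be Borel probability measures on ℝ² with finite second moments, writing (x, p) for the two coordinates on ℝ². Let q_k ≥ 0 with Σ_k q_k = 1, and let μ = Σ_k q_k (⊗_{j=1}^N ν_{jk}) be the corresponding finite mixture of product probability measures on (ℝ²)^N. Assume that for every j and k the coordinate variances satisfy Var_{ν_{jk}}(x) + Var_{ν_{jk}}(p) ≥ 1/2. Then the random variables u = Σ_{j=1}^N x_j and v = Σ_{j=1}^N (−1)^j p_j on (ℝ²)^N satisfy Var_μ(u) + Var_μ(v) ≥ N/2. -/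
open MeasureTheory BigOperators

noncomputable section

/-- Variance of a real-valued function: `Var_μ(f) = ∫ f² dμ − (∫ f dμ)²`. -/
def Var {α : Type} [MeasurableSpace α] (μ : Measure α) (f : α → ℝ) : ℝ :=
  ∫ x, f x ^ 2 ∂μ - (∫ x, f x ∂μ) ^ 2

open Finset ProbabilityTheory
open scoped NNReal ENNReal

/-!
Under each product component `⊗_j ν_{jk}` the summands of `u` and of `v` are independent, so the
variances add up mode by mode, and each mode contributes `Var(x_j) + Var(p_j) ≥ 1/2` (the signs
`(-1)^j` square away). Passing to the mixture can only increase the variance: the second moments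
are affine in the measure, while by Jensen `(Σ_k q_k m_k)² ≤ Σ_k q_k m_k²` for the means `m_k`.
-/

lemma Var_eq_variance {α : Type} [MeasurableSpace α] {μ : Measure α}
    [IsProbabilityMeasure μ] {f : α → ℝ} (hf : MemLp f 2 μ) : Var μ f = variance f μ := by
  rw [variance_eq_sub hf, Var]
  rfl

lemma Var_const_mul {α : Type} [MeasurableSpace α] (μ : Measure α) (f : α → ℝ) (c : ℝ) :
    Var μ (fun x => c * f x) = c ^ 2 * Var μ f := by
  simp only [Var, mul_pow, integral_const_mul]
  ring

section Pi

variable {ι : Type} [Fintype ι] {Ω : ι → Type} [∀ i, MeasurableSpace (Ω i)]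
  (ν : ∀ i, Measure (Ω i)) [∀ i, IsProbabilityMeasure (ν i)]

lemma memLp_pi_sum {f : ∀ i, Ω i → ℝ} (hf : ∀ i, MemLp (f i) 2 (ν i)) :
    MemLp (fun x => ∑ i, f i (x i)) 2 (Measure.pi ν) :=
  memLp_finsetSum _ fun i _ => (hf i).comp_measurePreserving (measurePreserving_eval ν i)

lemma Var_pi_sum {f : ∀ i, Ω i → ℝ} (hf : ∀ i, MemLp (f i) 2 (ν i)) :
    Var (Measure.pi ν) (fun x => ∑ i, f i (x i)) = ∑ i, Var (ν i) (f i) := by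
  simp only [Var_eq_variance (memLp_pi_sum ν hf), Var_eq_variance (hf _),
    ← variance_sum_pi hf]
  congr with x
  simp

end Pi

section Mixture

variable {α : Type} [MeasurableSpace α] {K : Type*} [Fintype K]
  (π : K → Measure α) (q : K → ℝ≥0)

lemma integral_sum_smul_measure {f : α → ℝ} (hf : ∀ k, Integrable f (π k)) :
    ∫ x, f x ∂(∑ k, (q k : ℝ≥0∞) • π k) = ∑ k, (q k : ℝ) * ∫ x, f x ∂(π k) := by
  rw [integral_finsetSum_measure fun k _ => (hf k).smul_measure ENNReal.coe_ne_top]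
  simp [NNReal.smul_def]

variable [∀ k, IsFiniteMeasure (π k)] {q}

lemma sum_mul_Var_le_Var_sum_smul (hq : ∑ k, q k = 1) {f : α → ℝ}
    (hf : ∀ k, MemLp f 2 (π k)) :
    ∑ k, (q k : ℝ) * Var (π k) f ≤ Var (∑ k, (q k : ℝ≥0∞) • π k) f := by
  have hq' : ∑ k, (q k : ℝ) = 1 := by exact_mod_cast hq
  have jensen :
      (∑ k, (q k : ℝ) * ∫ x, f x ∂π k) ^ 2 ≤ ∑ k, (q k : ℝ) * (∫ x, f x ∂π k) ^ 2 := by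
    simpa using even_two.convexOn_pow.map_sum_le (t := univ) (fun k _ => (q k).coe_nonneg)
      hq' (fun k _ => Set.mem_univ (∫ x, f x ∂π k))
  simp only [Var]
  rw [integral_sum_smul_measure π q fun k => (hf k).integrable_sq,
    integral_sum_smul_measure π q fun k => (hf k).integrable one_le_two]
  simp only [mul_sub, sum_sub_distrib]
  linarith

lemma le_Var_sum_smul_add (hq : ∑ k, q k = 1) {f g : α → ℝ} (hf : ∀ k, MemLp f 2 (π k))
    (hg : ∀ k, MemLp g 2 (π k)) {c : ℝ} (hc : ∀ k, c ≤ Var (π k) f + Var (π k) g) :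
    c ≤ Var (∑ k, (q k : ℝ≥0∞) • π k) f + Var (∑ k, (q k : ℝ≥0∞) • π k) g := by
  have hq' : ∑ k, (q k : ℝ) = 1 := by exact_mod_cast hq
  calc c = ∑ k, (q k : ℝ) * c := by rw [← sum_mul, hq', one_mul]
    _ ≤ ∑ k, (q k : ℝ) * (Var (π k) f + Var (π k) g) := by
      gcongr with k
      exact hc k
    _ = ∑ k, (q k : ℝ) * Var (π k) f + ∑ k, (q k : ℝ) * Var (π k) g := by
      simp only [mul_add, sum_add_distrib]
    _ ≤ _ := add_le_add (sum_mul_Var_le_Var_sum_smul π hq hf)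
      (sum_mul_Var_le_Var_sum_smul π hq hg)

end Mixture

theorem mixture_total_variance_ge_general
    {N : ℕ} {K : Type} [Fintype K]
    (ν : K → Fin N → Measure (ℝ × ℝ))
    [∀ k j, IsProbabilityMeasure (ν k j)]
    (hx2 : ∀ k j, MemLp (fun y : ℝ × ℝ => y.1) 2 (ν k j))
    (hp2 : ∀ k j, MemLp (fun y : ℝ × ℝ => y.2) 2 (ν k j))
    (q : K → NNReal) (hq : ∑ k, q k = 1)
    (μ : Measure (Fin N → ℝ × ℝ))
    (hμ : μ = ∑ k, (q k : ENNReal) • Measure.pi (fun j => ν k j))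
    (hvar : ∀ k j,
      Var (ν k j) (fun y => y.1) + Var (ν k j) (fun y => y.2) ≥ 1 / 2) :
    Var μ (fun x => ∑ j, (x j).1)
      + Var μ (fun x => ∑ j : Fin N, (-1 : ℝ) ^ ((j : ℕ) + 1) * (x j).2)
      ≥ (N : ℝ) / 2 := by
  subst hμ
  have hv2 : ∀ k (j : Fin N),
      MemLp (fun y : ℝ × ℝ => (-1 : ℝ) ^ ((j : ℕ) + 1) * y.2) 2 (ν k j) :=
    fun k j => (hp2 k j).const_mul _
  refine le_Var_sum_smul_add _ hq (fun k => memLp_pi_sum _ (hx2 k))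
    (fun k => memLp_pi_sum _ (hv2 k)) fun k => ?_
  rw [Var_pi_sum _ (hx2 k), Var_pi_sum _ (hv2 k), ← sum_add_distrib]
  have hsign (n : ℕ) : ((-1 : ℝ) ^ n) ^ 2 = 1 := by
    rw [← pow_mul, pow_mul', neg_one_sq, one_pow]
  simp only [Var_const_mul, hsign, one_mul]
  calc (N : ℝ) / 2 = ∑ _j : Fin N, (1 / 2 : ℝ) := by simp [div_eq_mul_inv]
    _ ≤ _ := sum_le_sum fun j _ => hvar k j

/-- Classical phase-space form of **Theorem 3.1**: for a finite mixture
`μ = Σ_k q_k ⊗_j ν_{jk}` of product probability measures on `(ℝ²)^N` whose components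
satisfy `Var(x) + Var(p) ≥ 1/2`, the EPR-type combinations `u = Σ_j x_j` and
`v = Σ_j (−1)^j p_j` satisfy `Var_μ(u) + Var_μ(v) ≥ N/2`. -/
theorem mixture_total_variance_ge
    {N : ℕ} (hN : 1 ≤ N) {K : Type} [Fintype K]
    (ν : K → Fin N → Measure (ℝ × ℝ))
    [∀ k j, IsProbabilityMeasure (ν k j)]
    (hx2 : ∀ k j, MemLp (fun y : ℝ × ℝ => y.1) 2 (ν k j))
    (hp2 : ∀ k j, MemLp (fun y : ℝ × ℝ => y.2) 2 (ν k j))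
    (q : K → NNReal) (hq : ∑ k, q k = 1)
    (μ : Measure (Fin N → ℝ × ℝ))
    (hμ : μ = ∑ k, (q k : ENNReal) • Measure.pi (fun j => ν k j))
    (hvar : ∀ k j,
      Var (ν k j) (fun y => y.1) + Var (ν k j) (fun y => y.2) ≥ 1 / 2) :
    Var μ (fun x => ∑ j, (x j).1)
      + Var μ (fun x => ∑ j : Fin N, (-1 : ℝ) ^ ((j : ℕ) + 1) * (x j).2)
      ≥ (N : ℝ) / 2 :=
  mixture_total_variance_ge_general ν hx2 hp2 q hq μ hμ hvar
end
end
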